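/- arXiv:2309.17297 — 7 statements merged into one kernel-verified Lean document; each statement's English description precedes it below -/
import Mathlib

section
/- For natural numbers n, m ≥ 1, the finite Łukasiewicz chain Ł_n (with universe {0,1,…,n} and operations x·y = max(x+y−n, 0), x→y = min(n−x+y, n)) embeds as a hoop into Ł_m if and only if n divides m. -/
/-- The interval `[0, u]` in a totally ordered abelian group: the universe of
the Wajsberg hoop `Γ(G, u)`. -/
def Gam {G : Type*} [AddCommGroup G] [LinearOrder G] [IsOrderedAddMonoid G] (u : G) : Type _ :=
  {x : G // 0 ≤ x ∧ x ≤ u}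

/-- Product `a·b = max(a+b-u, 0)` of `Γ(G,u)`. -/
def hmul {G : Type*} [AddCommGroup G] [LinearOrder G] [IsOrderedAddMonoid G] {u : G} (a b : Gam u) : Gam u :=
  ⟨max (a.1 + b.1 - u) 0, le_max_right _ _,
    max_le (sub_le_iff_le_add.mpr (add_le_add a.2.2 b.2.2)) (a.2.1.trans a.2.2)⟩

/-- Residuum `a→b = min(u-a+b, u)` of `Γ(G,u)`. -/
def himp {G : Type*} [AddCommGroup G] [LinearOrder G] [IsOrderedAddMonoid G] {u : G} (a b : Gam u) : Gam u :=
  ⟨min (u - a.1 + b.1) u,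
    le_min (add_nonneg (sub_nonneg.mpr a.2.2) b.2.1) (a.2.1.trans a.2.2),
    min_le_right _ _⟩

/-- Top element (monoid unit) of `Γ(G,u)`. -/
def hone {G : Type*} [AddCommGroup G] [LinearOrder G] [IsOrderedAddMonoid G] (u : G) (hu : 0 ≤ u) : Gam u :=
  ⟨u, hu, le_rfl⟩

/-- An embedding of hoops: an injective map preserving `·`, `→` and `1`. -/
structure IsHoopEmbedding {A B : Type*} (mA : A → A → A) (iA : A → A → A) (oA : A)
    (mB : B → B → B) (iB : B → B → B) (oB : B) (f : A → B) : Prop where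
  inj : Function.Injective f
  map_mul : ∀ x y, f (mA x y) = mB (f x) (f y)
  map_imp : ∀ x y, f (iA x y) = iB (f x) (f y)
  map_one : f oA = oB

/-!
An embedding `f : Ł_n → Γ(G, v)` fixes `0`, the only idempotent besides the top, so it
commutes with the negation `¬x = x → 0`, which is `x ↦ u - x` in `Γ(G, u)`. Put
`d = v - f(n - 1)`, positive by injectivity. The element `1 = ¬(n - 1)` is also the
`(n - 1)`-st power of the coatom `n - 1`, and in `Γ(G, v)` the `k`-th power of `v - d` is
`max (v - k • d) 0`. Comparing the two images of `1` gives
`d = max (v - (n - 1) • d) 0`, hence `v = n • d`. Conversely `x ↦ k • x` embeds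
`Γ(G, u)` into `Γ(G, k • u)` for `k ≠ 0`.
-/

section Gam

variable {G : Type*} [AddCommGroup G] [LinearOrder G] [IsOrderedAddMonoid G]

def hzero (u : G) (hu : 0 ≤ u) : Gam u :=
  ⟨0, le_rfl, hu⟩

@[simp] lemma val_hmul {u : G} (x y : Gam u) : (hmul x y).1 = max (x.1 + y.1 - u) 0 := rfl

@[simp] lemma val_himp {u : G} (x y : Gam u) : (himp x y).1 = min (u - x.1 + y.1) u := rfl

@[simp] lemma val_hone (u : G) (hu : 0 ≤ u) : (hone u hu).1 = u := rfl

@[simp] lemma val_hzero (u : G) (hu : 0 ≤ u) : (hzero u hu).1 = 0 := rfl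

lemma val_eq_zero_or_eq_of_hmul_self {u : G} {x : Gam u} (hx : hmul x x = x) :
    x.1 = 0 ∨ x.1 = u := by
  have h := congrArg Subtype.val hx
  simp only [val_hmul] at h
  grind

lemma val_himp_hzero {u : G} (hu : 0 ≤ u) (x : Gam u) : (himp x (hzero u hu)).1 = u - x.1 := by
  simp only [val_himp, val_hzero, add_zero, min_eq_left_iff, sub_le_self_iff]
  exact x.2.1

lemma val_iterate_hmul {u : G} (hu : 0 ≤ u) (x : Gam u) (k : ℕ) :
    ((hmul x)^[k] (hone u hu)).1 = max (u - k • (u - x.1)) 0 := by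
  induction k with
  | zero => simpa using hu
  | succ k ih =>
    have hd : 0 ≤ u - x.1 := sub_nonneg.mpr x.2.2
    rw [Function.iterate_succ_apply', val_hmul, ih, succ_nsmul]
    grind

end Gam

namespace IsHoopEmbedding

variable {G H : Type*} [AddCommGroup G] [LinearOrder G] [IsOrderedAddMonoid G]
  [AddCommGroup H] [LinearOrder H] [IsOrderedAddMonoid H]
  {u : G} {v : H} {hu : 0 ≤ u} {hv : 0 ≤ v} {f : Gam u → Gam v}

lemma val_map_ne_of_val_ne (hf : IsHoopEmbedding hmul himp (hone u hu) hmul himp (hone v hv) f)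
    {x : Gam u} (hx : x.1 ≠ u) : (f x).1 ≠ v := by
  intro h
  apply hx
  have : f x = f (hone u hu) := by rw [hf.map_one]; exact Subtype.ext h
  exact congrArg Subtype.val (hf.inj this)

lemma map_hzero (hf : IsHoopEmbedding hmul himp (hone u hu) hmul himp (hone v hv) f)
    (hu0 : u ≠ 0) : f (hzero u hu) = hzero v hv := by
  have hidem : hmul (f (hzero u hu)) (f (hzero u hu)) = f (hzero u hu) := by
    rw [← hf.map_mul]
    congr 1
    exact Subtype.ext (by simpa using hu)
  refine Subtype.ext ((val_eq_zero_or_eq_of_hmul_self hidem).resolve_right ?_)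
  exact hf.val_map_ne_of_val_ne (Ne.symm hu0)

lemma map_iterate_hmul (hf : IsHoopEmbedding hmul himp (hone u hu) hmul himp (hone v hv) f)
    (x : Gam u) (k : ℕ) : f ((hmul x)^[k] (hone u hu)) = (hmul (f x))^[k] (hone v hv) := by
  induction k with
  | zero => exact hf.map_one
  | succ k ih => rw [Function.iterate_succ_apply', Function.iterate_succ_apply', hf.map_mul, ih]

end IsHoopEmbedding

section Embedding

variable {G : Type*} [AddCommGroup G] [LinearOrder G] [IsOrderedAddMonoid G]

lemma exists_eq_nsmul_of_isHoopEmbedding {n : ℕ} (hn : 1 ≤ n) {v : G} {hv : 0 ≤ v}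
    {f : Gam (n : ℤ) → Gam v}
    (hf : IsHoopEmbedding hmul himp (hone _ (Int.natCast_nonneg n)) hmul himp (hone v hv) f) :
    ∃ d : G, v = n • d := by
  have hn0 : (0 : ℤ) ≤ n := Int.natCast_nonneg n
  let coatom : Gam (n : ℤ) := ⟨n - 1, by omega, by omega⟩
  set d := v - (f coatom).1 with hd
  have hd_pos : 0 < d :=
    sub_pos.mpr (lt_of_le_of_ne (f coatom).2.2 (hf.val_map_ne_of_val_ne (by simp [coatom])))
  have hpow_eq_neg : (hmul coatom)^[n - 1] (hone _ hn0) = himp coatom (hzero _ hn0) := by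
    apply Subtype.ext
    rw [val_iterate_hmul, val_himp_hzero]
    simp only [coatom, sub_sub_cancel, nsmul_eq_mul, mul_one]
    omega
  have himage := congrArg (fun x => (f x).1) hpow_eq_neg
  simp only [hf.map_iterate_hmul, hf.map_imp, hf.map_hzero (by omega : (n : ℤ) ≠ 0),
    val_iterate_hmul, val_himp_hzero, ← hd] at himage
  refine ⟨d, ?_⟩
  obtain ⟨k, rfl⟩ : ∃ k, n = k + 1 := ⟨n - 1, by omega⟩
  rw [Nat.add_sub_cancel] at himage
  rw [succ_nsmul]
  grind

def nsmulMap {u v : G} (k : ℕ) (huv : k • u = v) (x : Gam u) : Gam v :=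
  ⟨k • x.1, nsmul_nonneg x.2.1 k, huv ▸ nsmul_le_nsmul_right x.2.2 k⟩

@[simp] lemma val_nsmulMap {u v : G} (k : ℕ) (huv : k • u = v) (x : Gam u) :
    (nsmulMap k huv x).1 = k • x.1 := rfl

lemma isHoopEmbedding_nsmulMap {u v : G} (hu : 0 ≤ u) (hv : 0 ≤ v) {k : ℕ} (hk : k ≠ 0)
    (huv : k • u = v) :
    IsHoopEmbedding hmul himp (hone u hu) hmul himp (hone v hv) (nsmulMap k huv) := by
  subst huv
  refine ⟨fun x y hxy => Subtype.ext ?_, fun x y => Subtype.ext ?_, fun x y => Subtype.ext ?_,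
    rfl⟩
  · exact IsAddTorsionFree.nsmul_right_injective hk (congrArg Subtype.val hxy)
  · simp only [val_nsmulMap, val_hmul, (nsmul_right_mono k).map_max, nsmul_add, nsmul_sub,
      nsmul_zero]
  · simp only [val_nsmulMap, val_himp, (nsmul_right_mono k).map_min, nsmul_add, nsmul_sub]

end Embedding

/-- for `n, m ≥ 1`, the finite Łukasiewicz chain `Ł_n = Γ(ℤ,n)` embeds
(as a hoop) into `Ł_m` if and only if `n ∣ m`. -/
theorem luk_chain_embeds_iff (n m : ℕ) (hn : 1 ≤ n) (hm : 1 ≤ m) :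
    (∃ f : Gam ((n : ℤ)) → Gam ((m : ℤ)),
        IsHoopEmbedding hmul himp (hone _ (Int.natCast_nonneg n))
          hmul himp (hone _ (Int.natCast_nonneg m)) f)
      ↔ n ∣ m := by
  constructor
  · rintro ⟨f, hf⟩
    obtain ⟨d, hd⟩ := exists_eq_nsmul_of_isHoopEmbedding hn hf
    exact Int.natCast_dvd_natCast.mp ⟨d, by simpa using hd⟩
  · rintro ⟨k, rfl⟩
    have hk : k ≠ 0 := by rintro rfl; omega
    exact ⟨_, isHoopEmbedding_nsmulMap _ _ hk (by push_cast; rw [nsmul_eq_mul, mul_comm])⟩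
end

section
/- For natural numbers n, m ≥ 1 and 0 ≤ h < m, the finite Łukasiewicz chain Ł_n embeds into Ł_{m,h} = Γ(ℤ ×_lex ℤ, (m,h)) if and only if n divides gcd(m, h). -/
theorem lex_nonneg (a b : ℤ) (h : 0 < a) : (0 : ℤ ×ₗ ℤ) ≤ toLex (a, b) :=
  Prod.Lex.le_iff.mpr (Or.inl h)

/-!
A hoop embedding `f` of `Ł_n` into `Γ(H, v)` is monotone (`a ≤ b` iff `a → b = 1`) and sends `0`
to `0`, the only idempotent besides `1`. Since `(k + 1) → k = 1 → 0` in `Ł_n`, every increment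
`f (k + 1) - f k` equals `c = f 1`, hence `v = f n = n • c`. Conversely, if `n • c = v` then
`t ↦ t • c` is an order embedding `ℤ → H` and induces a hoop embedding `Ł_n → Γ(H, v)`. In
`ℤ ×ₗ ℤ` the equation `n • c = (m, h)` is solvable iff `n` divides both `m` and `h`.
-/

namespace Gam

variable {G H : Type*} [AddCommGroup G] [LinearOrder G] [IsOrderedAddMonoid G]
  [AddCommGroup H] [LinearOrder H] [IsOrderedAddMonoid H]

theorem himp_eq_hone_iff {u : G} (hu : 0 ≤ u) (a b : Gam u) :
    himp a b = hone u hu ↔ a.1 ≤ b.1 := by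
  refine (Subtype.ext_iff (a1 := himp a b) (a2 := hone u hu)).trans ?_
  change min (u - a.1 + b.1) u = u ↔ _
  rw [min_eq_right_iff, sub_add_eq_add_sub, le_sub_iff_add_le, add_le_add_iff_left]

theorem val_himp_of_le {u : G} {a b : Gam u} (hba : b.1 ≤ a.1) :
    (himp a b).1 = u - a.1 + b.1 :=
  min_eq_left (by rw [sub_add_eq_add_sub, sub_le_iff_le_add, add_le_add_iff_left]; exact hba)

theorem val_eq_zero_or_eq_of_hmul_self {u : G} {a : Gam u} (ha : hmul a a = a) :
    a.1 = 0 ∨ a.1 = u := by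
  have hval : max (a.1 + a.1 - u) 0 = a.1 := congrArg Subtype.val ha
  rcases max_cases (a.1 + a.1 - u) 0 with ⟨h, -⟩ | ⟨h, -⟩
  · right
    rw [h, sub_eq_iff_eq_add, add_right_inj] at hval
    exact hval
  · exact Or.inl (hval.symm.trans h)

def map (g : G →+ H) (hg : Monotone g) {u : G} {v : H} (hguv : g u = v) (x : Gam u) : Gam v :=
  ⟨g x.1, map_zero g ▸ hg x.2.1, hguv ▸ hg x.2.2⟩

theorem isHoopEmbedding_map {u : G} {v : H} (hu : 0 ≤ u) (hv : 0 ≤ v) (g : G →+ H)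
    (hg : StrictMono g) (hguv : g u = v) :
    IsHoopEmbedding hmul himp (hone u hu) hmul himp (hone v hv) (map g hg.monotone hguv) where
  inj x y hxy := Subtype.ext (hg.injective (congrArg Subtype.val hxy))
  map_mul x y := Subtype.ext <| by
    change g (max (x.1 + y.1 - u) 0) = max (g x.1 + g y.1 - v) 0
    rw [hg.monotone.map_max, map_sub, map_add, map_zero, hguv]
  map_imp x y := Subtype.ext <| by
    change g (min (u - x.1 + y.1) u) = min (v - g x.1 + g y.1) v
    rw [hg.monotone.map_min, map_add, map_sub, hguv]
  map_one := Subtype.ext hguv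

end Gam

namespace IsHoopEmbedding

variable {G H : Type*} [AddCommGroup G] [LinearOrder G] [IsOrderedAddMonoid G]
  [AddCommGroup H] [LinearOrder H] [IsOrderedAddMonoid H]

theorem val_le_val {u : G} {v : H} {hu : 0 ≤ u} {hv : 0 ≤ v} {f : Gam u → Gam v}
    (hf : IsHoopEmbedding hmul himp (hone u hu) hmul himp (hone v hv) f) {x y : Gam u}
    (hxy : x.1 ≤ y.1) : (f x).1 ≤ (f y).1 := by
  rw [← Gam.himp_eq_hone_iff hv, ← hf.map_imp, ← hf.map_one, (Gam.himp_eq_hone_iff hu x y).2 hxy]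

end IsHoopEmbedding

def lukElem {n : ℕ} (k : ℕ) (hk : k ≤ n) : Gam (n : ℤ) :=
  ⟨k, Int.natCast_nonneg k, by exact_mod_cast hk⟩

section LukChain

variable {H : Type*} [AddCommGroup H] [LinearOrder H] [IsOrderedAddMonoid H]
  {n : ℕ} {v : H} {hv : 0 ≤ v} {f : Gam (n : ℤ) → Gam v}

theorem IsHoopEmbedding.val_lukElem_zero (hn : 1 ≤ n)
    (hf : IsHoopEmbedding hmul himp (hone _ (Int.natCast_nonneg n)) hmul himp (hone v hv) f) :
    (f (lukElem 0 n.zero_le)).1 = 0 := by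
  have hidem : hmul (lukElem (n := n) 0 n.zero_le) (lukElem 0 n.zero_le) = lukElem 0 n.zero_le :=
    Subtype.ext (by change max _ _ = _; simp [lukElem])
  refine (Gam.val_eq_zero_or_eq_of_hmul_self (hf.map_mul _ _ ▸ congrArg f hidem)).resolve_right ?_
  intro htop
  have h0n : lukElem (n := n) 0 n.zero_le = hone _ (Int.natCast_nonneg n) :=
    hf.inj ((Subtype.ext htop).trans hf.map_one.symm)
  have : (0 : ℤ) = n := congrArg Subtype.val h0n
  omega

theorem IsHoopEmbedding.val_lukElem (hn : 1 ≤ n)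
    (hf : IsHoopEmbedding hmul himp (hone _ (Int.natCast_nonneg n)) hmul himp (hone v hv) f)
    (k : ℕ) (hk : k ≤ n) : (f (lukElem k hk)).1 = k • (f (lukElem 1 hn)).1 := by
  induction k with
  | zero => rw [hf.val_lukElem_zero hn, zero_smul]
  | succ k ih =>
    -- `(k + 1) → k` and `1 → 0` are both `n - 1` in `Ł_n`.
    have hstep : himp (lukElem (k + 1) hk) (lukElem k (by omega)) =
        himp (lukElem 1 hn) (lukElem 0 n.zero_le) :=
      Subtype.ext (by change min _ _ = min _ _; simp only [lukElem]; push_cast; omega)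
    have hval := congrArg Subtype.val (congrArg f hstep)
    rw [hf.map_imp, hf.map_imp, Gam.val_himp_of_le (hf.val_le_val (by simp [lukElem])),
      Gam.val_himp_of_le (hf.val_le_val (by simp [lukElem])), hf.val_lukElem_zero hn,
      ih (by omega)] at hval
    rw [add_zero, sub_add_eq_add_sub, sub_eq_sub_iff_add_eq_add, add_assoc, add_right_inj] at hval
    rw [succ_nsmul, hval]

theorem IsHoopEmbedding.exists_nsmul_eq (hn : 1 ≤ n)
    (hf : IsHoopEmbedding hmul himp (hone _ (Int.natCast_nonneg n)) hmul himp (hone v hv) f) :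
    ∃ c : H, n • c = v :=
  ⟨_, (hf.val_lukElem hn n le_rfl).symm.trans (congrArg Subtype.val hf.map_one)⟩

end LukChain

theorem exists_isHoopEmbedding_luk_iff {H : Type*} [AddCommGroup H] [LinearOrder H]
    [IsOrderedAddMonoid H] {n : ℕ} (hn : 1 ≤ n) {v : H} (hv : 0 < v) :
    (∃ f : Gam (n : ℤ) → Gam v,
        IsHoopEmbedding hmul himp (hone _ (Int.natCast_nonneg n)) hmul himp (hone v hv.le) f) ↔
      ∃ c : H, n • c = v := by
  refine ⟨fun ⟨f, hf⟩ => hf.exists_nsmul_eq hn, fun ⟨c, hc⟩ => ?_⟩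
  have hc0 : 0 < c := lt_of_not_ge fun h => hv.not_ge (hc ▸ nsmul_nonpos h n)
  exact ⟨_, Gam.isHoopEmbedding_map _ hv.le (zmultiplesHom H c) (zsmul_left_strictMono hc0)
    (by rw [zmultiplesHom_apply, natCast_zsmul, hc])⟩

theorem exists_nsmul_eq_toLex_iff (n : ℕ) (a b : ℤ) :
    (∃ c : ℤ ×ₗ ℤ, n • c = toLex (a, b)) ↔ (n : ℤ) ∣ a ∧ (n : ℤ) ∣ b := by
  constructor
  · rintro ⟨c, hc⟩
    have hcomp : (n : ℤ) * (ofLex c).1 = a ∧ (n : ℤ) * (ofLex c).2 = b := by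
      simpa [Prod.ext_iff] using congrArg ofLex hc
    exact ⟨⟨_, hcomp.1.symm⟩, ⟨_, hcomp.2.symm⟩⟩
  · rintro ⟨⟨x, rfl⟩, ⟨y, rfl⟩⟩
    exact ⟨toLex (x, y), ofLex.injective (by simp [Prod.ext_iff])⟩

/-- for `n, m ≥ 1` and `0 ≤ h < m`, the chain `Ł_n` embeds into
`Ł_{m,h} = Γ(ℤ ×ₗ ℤ, (m,h))` if and only if `n ∣ gcd(m,h)`. -/
theorem luk_chain_embeds_into_Lmh_iff (n m h : ℕ) (hn : 1 ≤ n) (hm : 1 ≤ m) :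
    (∃ f : Gam ((n : ℤ)) → Gam (toLex ((m : ℤ), (h : ℤ))),
        IsHoopEmbedding hmul himp (hone _ (Int.natCast_nonneg n))
          hmul himp (hone _ (lex_nonneg _ _ (by exact_mod_cast hm))) f)
      ↔ n ∣ Nat.gcd m h := by
  have hpos : (0 : ℤ ×ₗ ℤ) < toLex ((m : ℤ), (h : ℤ)) :=
    Prod.Lex.lt_iff.mpr (Or.inl (show (0 : ℤ) < m by exact_mod_cast hm))
  rw [Nat.dvd_gcd_iff, ← Int.natCast_dvd_natCast, ← Int.natCast_dvd_natCast]
  exact (exists_isHoopEmbedding_luk_iff hn hpos).trans (exists_nsmul_eq_toLex_iff n m h)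
end

section
/- Every totally ordered Wajsberg hoop is either bounded below or cancellative. -/
/-- A hoop: a commutative (integral, residuated) monoid with a residuum `→`,
axiomatized equationally by `x→x = 1`, divisibility `x·(x→y) = y·(y→x)` and
`(x·y)→z = x→(y→z)`.  The order is `a ≤ b ↔ a→b = 1`. -/
class Hoop (A : Type*) extends CommMonoid A where
  himp : A → A → A
  himp_self : ∀ a : A, himp a a = 1
  div_eq : ∀ a b : A, a * himp a b = b * himp b a
  himp_mul : ∀ a b c : A, himp (a * b) c = himp a (himp b c)

/-- A Wajsberg hoop: a hoop satisfying Tanaka's equation. -/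
class WajsbergHoop (A : Type*) extends Hoop A where
  tanaka : ∀ a b : A, himp (himp a b) b = himp (himp b a) a

namespace HoopAux

variable {A : Type*} [Hoop A]

local infixr:60 " ⇨ " => Hoop.himp

lemma hs (a : A) : a ⇨ a = 1 := Hoop.himp_self a
lemma dv (a b : A) : a * (a ⇨ b) = b * (b ⇨ a) := Hoop.div_eq a b
lemma hm (a b c : A) : (a * b) ⇨ c = a ⇨ (b ⇨ c) := Hoop.himp_mul a b c

/-- `x · (x → 1) = x`. -/
lemma mul_himp_one (x : A) : x * (x ⇨ 1) = x := by
  set t := x ⇨ (1 : A) with ht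
  -- (i) : 1 ⇨ x = x * t
  have hi : (1 : A) ⇨ x = x * t := by
    have := dv (1 : A) x
    rwa [one_mul] at this
  -- x ⇨ (1 ⇨ x) = 1
  have ha : x ⇨ ((1 : A) ⇨ x) = 1 := by
    have h := (hm x 1 x).symm
    rwa [mul_one, hs] at h
  -- (iii) : t * (t ⇨ 1) = t
  have hiii : t * (t ⇨ (1 : A)) = t := by
    have h1 : t * (t ⇨ (1 : A)) = (1 : A) ⇨ t := by
      have := dv t (1 : A)
      rwa [one_mul] at this
    have h2 : (1 : A) ⇨ t = t := by
      have := (hm (1 : A) x 1).symm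
      rwa [one_mul] at this
    rw [h1, h2]
  -- (1 ⇨ x) ⇨ x = t ⇨ 1
  have hiv : ((1 : A) ⇨ x) ⇨ x = t ⇨ (1 : A) := by
    rw [hi, mul_comm, hm, hs]
  -- (ii)
  have hii : ((1 : A) ⇨ x) * (((1 : A) ⇨ x) ⇨ x) = x := by
    have := dv ((1 : A) ⇨ x) x
    rwa [ha, mul_one] at this
  rw [hiv, hi, mul_assoc, hiii] at hii
  exact hii

/-- `x → 1 = 1` : the unit is the top element. -/
lemma himp_one (x : A) : x ⇨ (1 : A) = 1 := by
  have h := hm (x ⇨ (1 : A)) x 1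
  rw [mul_comm, mul_himp_one, hs] at h
  exact h

/-- `1 → x = x`. -/
lemma one_himp (x : A) : (1 : A) ⇨ x = x := by
  have := dv (1 : A) x
  rwa [one_mul, himp_one, mul_one] at this

lemma antisymm {a b : A} (h1 : a ⇨ b = 1) (h2 : b ⇨ a = 1) : a = b := by
  have := dv a b
  rwa [h1, h2, mul_one, mul_one] at this

/-- If `a ≤ b` then `a = b · (b → a)`. -/
lemma ble {a b : A} (h : a ⇨ b = 1) : a = b * (b ⇨ a) := by
  have := dv a b
  rwa [h, mul_one] at this

/-- `a·b ≤ b`. -/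
lemma mul_le (a b : A) : (a * b) ⇨ b = 1 := by
  rw [hm, hs, himp_one]

lemma le_trans {a b c : A} (h1 : a ⇨ b = 1) (h2 : b ⇨ c = 1) : a ⇨ c = 1 := by
  have ha : a = (b ⇨ a) * b := by rw [mul_comm]; exact ble h1
  rw [ha, hm, h2, himp_one]

lemma mul_mono {a b : A} (c : A) (h : a ⇨ b = 1) : (c * a) ⇨ (c * b) = 1 := by
  obtain ⟨k, hk⟩ : ∃ k, a = b * k := ⟨b ⇨ a, ble h⟩
  have hca : c * a = k * (c * b) := by rw [hk]; simp [mul_comm, mul_assoc, mul_left_comm]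
  rw [hca, hm, hs, himp_one]

end HoopAux

namespace WHAux

open HoopAux

variable {A : Type*} [WajsbergHoop A]

local infixr:60 " ⇨ " => Hoop.himp

/-- Key lemma: in a totally ordered Wajsberg hoop, if `u·y = y` with `u ≠ 1`,
then `y` is a least element. -/
lemma fixed_is_bot (htot : ∀ a b : A, a ⇨ b = 1 ∨ b ⇨ a = 1)
    {u y : A} (hfix : u * y = y) (hu : u ≠ 1) : ∀ t : A, y ⇨ t = 1 := by
  intro t
  by_contra hyt
  have hty : t ⇨ y = 1 := (htot y t).resolve_left hyt
  -- y ≤ u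
  have hyu : y ⇨ u = 1 := by
    have h := hm y u u
    rw [mul_comm, hfix, hs, himp_one] at h
    exact h
  have htu : t ⇨ u = 1 := le_trans hty hyu
  -- u * (u ⇨ t) = t
  have hut : u * (u ⇨ t) = t := by
    have := dv u t
    rwa [htu, mul_one] at this
  -- s := u ⇨ t ; show s ≤ y
  set s := u ⇨ t with hsdef
  have hsy : s ⇨ y = 1 := by
    rcases htot s y with h | h
    · exact h
    · -- y ≤ s would give y = u*y ≤ u*s = t, contradiction
      exfalso
      have := mul_mono u h
      rw [hfix, hut] at this
      exact hyt this
  -- s is fixed by u (downward closure of fixed points)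
  have hfs : u * s = s := by
    obtain ⟨k, hk⟩ : ∃ k, s = y * k := ⟨y ⇨ s, ble hsy⟩
    calc u * s = (u * y) * k := by rw [hk]; simp [mul_comm, mul_assoc, mul_left_comm]
    _ = y * k := by rw [hfix]
    _ = s := hk.symm
  have hst : s = t := by rw [← hfs, hut]
  -- Tanaka with (u, t) now forces u = 1
  have htk := WajsbergHoop.tanaka u t
  rw [show Hoop.himp u t = t from hst, hs, htu, one_himp] at htk
  exact hu htk.symm

end WHAux

/-- every totally ordered Wajsberg hoop is either bounded below
(has a least element) or cancellative.  (The order is `a ≤ b ↔ a→b = 1`.) -/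
theorem wajsberg_chain_bounded_or_cancellative (A : Type*) [WajsbergHoop A]
    (htot : ∀ a b : A, Hoop.himp a b = 1 ∨ Hoop.himp b a = 1) :
    (∃ z : A, ∀ x : A, Hoop.himp z x = 1) ∨ (∀ a b c : A, a * c = b * c → a = b) := by
  by_cases hc : ∀ a b c : A, a * c = b * c → a = b
  · exact Or.inr hc
  · push_neg at hc
    obtain ⟨a, b, c, habc, hab⟩ := hc
    left
    -- WLOG a ≤ b (otherwise swap); extract u < 1 with u * (b*c) = b*c
    rcases htot a b with h | h
    · have hu : Hoop.himp b a ≠ 1 := fun h' => hab (HoopAux.antisymm h h')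
      have hfix : Hoop.himp b a * (b * c) = b * c := by
        conv_rhs => rw [← habc, HoopAux.ble h]
        simp [mul_comm, mul_assoc, mul_left_comm]
      exact ⟨b * c, WHAux.fixed_is_bot htot hfix hu⟩
    · have hu : Hoop.himp a b ≠ 1 := fun h' => hab (HoopAux.antisymm h' h)
      have hfix : Hoop.himp a b * (a * c) = a * c := by
        conv_rhs => rw [habc, HoopAux.ble h]
        simp [mul_comm, mul_assoc, mul_left_comm]
      exact ⟨a * c, WHAux.fixed_is_bot htot hfix hu⟩
end

section
/- Every cancellative basic hoop is a Wajsberg hoop, i.e., every cancellative basic hoop satisfies Tanaka's equation (x→y)→y = (y→x)→x. -/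
section HoopLemmas
variable {H : Type*} [Hoop H]

lemma hoop_aux0 (x : H) : x * Hoop.himp x 1 = Hoop.himp 1 x := by
  have h := Hoop.div_eq (1 : H) x
  simpa using h.symm

lemma hoop_aux1 (x : H) : Hoop.himp x (x * Hoop.himp x 1) = 1 := by
  rw [hoop_aux0]
  have h2 : Hoop.himp (x * 1) x = Hoop.himp x (Hoop.himp 1 x) := Hoop.himp_mul x 1 x
  rw [mul_one] at h2
  rw [← h2, Hoop.himp_self]

lemma hoop_aux2 (x : H) : Hoop.himp (Hoop.himp x 1) 1 = 1 := by
  set u := Hoop.himp x 1 with hu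
  have h : Hoop.himp u 1 = Hoop.himp u (Hoop.himp x (x * u)) := by
    rw [hoop_aux1]
  rw [h, ← Hoop.himp_mul, mul_comm u x, Hoop.himp_self]

lemma hoop_mul_himp_one (x : H) : x * Hoop.himp x 1 = x := by
  set u := Hoop.himp x 1 with hu
  have hA : Hoop.himp (x * u) x = 1 := by
    rw [mul_comm, Hoop.himp_mul, Hoop.himp_self, hu, hoop_aux2]
  have h := Hoop.div_eq (x * u) x
  rw [hA, mul_one] at h
  rw [h, hoop_aux1, mul_one]

lemma hoop_one_himp (x : H) : Hoop.himp 1 x = x := by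
  rw [← hoop_aux0, hoop_mul_himp_one]

end HoopLemmas

/-- every cancellative basic hoop (a hoop embeddable into a product
of totally ordered hoops) satisfies Tanaka's equation, i.e. is a Wajsberg hoop. -/
theorem cancellative_basic_hoop_is_wajsberg (A : Type*) [Hoop A]
    (I : Type*) (B : I → Type*) [∀ i, Hoop (B i)]
    (htot : ∀ i, ∀ x y : B i, Hoop.himp x y = 1 ∨ Hoop.himp y x = 1)
    (f : A → ∀ i, B i) (hinj : Function.Injective f)
    (hfmul : ∀ x y : A, ∀ i, f (x * y) i = f x i * f y i)
    (hfimp : ∀ x y : A, ∀ i, f (Hoop.himp x y) i = Hoop.himp (f x i) (f y i))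
    (hfone : ∀ i, f 1 i = 1)
    (hcanc : ∀ a b c : A, a * c = b * c → a = b) :
    ∀ x y : A, Hoop.himp (Hoop.himp x y) y = Hoop.himp (Hoop.himp y x) x := by
  -- cancellativity gives `x→1 = 1` in A
  have C1 : ∀ x : A, Hoop.himp x 1 = 1 := by
    intro x
    apply hcanc _ _ x
    rw [mul_comm, hoop_mul_himp_one, one_mul]
  -- cancellativity gives `p→(p·x) = x` in A
  have C2 : ∀ p x : A, Hoop.himp p (p * x) = x := by
    intro p x
    have hint : Hoop.himp (p * x) p = 1 := by
      rw [mul_comm, Hoop.himp_mul, Hoop.himp_self, C1]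
    have h := Hoop.div_eq p (p * x)
    rw [hint, mul_one] at h
    apply hcanc _ _ p
    rw [mul_comm, h, mul_comm]
  intro x y
  set p := Hoop.himp x y with hp
  set q := Hoop.himp y x with hq
  set m := x * p with hm
  have hpm : Hoop.himp p m = x := by rw [hm, mul_comm x p]; exact C2 p x
  have hm2 : m = y * q := Hoop.div_eq x y
  have hqm : Hoop.himp q m = y := by rw [hm2, mul_comm y q]; exact C2 q y
  apply hinj
  funext i
  set a := f x i with ha
  set b := f y i with hb
  have hLHS : f (Hoop.himp p y) i = Hoop.himp (Hoop.himp a b) b := by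
    rw [hfimp, hfimp]
  have hRHS : f (Hoop.himp q x) i = Hoop.himp (Hoop.himp b a) a := by
    rw [hfimp, hfimp]
  rw [hLHS, hRHS]
  have hfm : f m i = a * Hoop.himp a b := by
    rw [hm, hfmul, hfimp]
  have hfm2 : f m i = b * Hoop.himp b a := by
    rw [hm2, hfmul, hfimp]
  have hpmi : Hoop.himp (Hoop.himp a b) (f m i) = a := by
    have := congrFun (congrArg f hpm) i
    rw [hfimp, hp, hfimp] at this; exact this
  have hqmi : Hoop.himp (Hoop.himp b a) (f m i) = b := by
    have := congrFun (congrArg f hqm) i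
    rw [hfimp, hq, hfimp] at this; exact this
  rcases htot i a b with hab | hba
  · -- a ≤ b : both sides equal b
    rw [hab, hoop_one_himp]
    have : f m i = a := by rw [hfm, hab, mul_one]
    rw [this] at hqmi
    exact hqmi.symm
  · -- b ≤ a : both sides equal a
    rw [hba, hoop_one_himp]
    have : f m i = b := by rw [hfm2, hba, mul_one]
    rw [this] at hpmi
    exact hpmi
end

section
/- If Wajsberg terms p(x) and q(x) correspond to McNaughton functions f, g (unary McNaughton functions fixing 1, i.e., one-variable Wajsberg functions) with f = g on a neighborhood of 1, then C_ω satisfies the identity p(x) ≈ q(x). -/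
/-- One-variable terms in the language `{·, →, 1}` of Wajsberg hoops. -/
inductive WTerm
  | var : WTerm
  | one : WTerm
  | mul : WTerm → WTerm → WTerm
  | imp : WTerm → WTerm → WTerm

/-- Evaluation of a one-variable Wajsberg term on the standard MV-algebra `[0,1]`:
it computes the associated McNaughton function. -/
noncomputable def evalR : WTerm → ℝ → ℝ
  | .var, x => x
  | .one, _ => 1
  | .mul s t, x => max (evalR s x + evalR t x - 1) 0
  | .imp s t, x => min (1 - evalR s x + evalR t x) 1

/-- Evaluation of a one-variable Wajsberg term in `C_ω`: elements of `C_ω` are the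
powers `a^n` of the generator (the negative cone of `ℤ`), recorded by their
exponents, so the product is `+` and the residuum `a^i → a^j = a^{max(j-i,0)}`
is truncated subtraction. -/
def evalC : WTerm → ℕ → ℕ
  | .var, n => n
  | .one, _ => 0
  | .mul s t, n => evalC s n + evalC t n
  | .imp s t, n => evalC t n - evalC s n

lemma evalR_near_one (p : WTerm) (n : ℕ) :
    ∃ δ > (0:ℝ), ∀ t : ℝ, 0 < t → t ≤ δ →
      evalR p (1 - n * t) = 1 - (evalC p n : ℝ) * t := by
  induction p with
  | var => exact ⟨1, one_pos, fun t _ _ => by simp [evalR, evalC]⟩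
  | one => exact ⟨1, one_pos, fun t _ _ => by simp [evalR, evalC]⟩
  | mul s u ihs ihu =>
    obtain ⟨δ1, hδ1, h1⟩ := ihs
    obtain ⟨δ2, hδ2, h2⟩ := ihu
    refine ⟨min (min δ1 δ2) (1 / ((evalC s n : ℝ) + evalC u n + 1)), ?_, ?_⟩
    · have : (0:ℝ) < (evalC s n : ℝ) + evalC u n + 1 := by positivity
      positivity
    · intro t ht htδ
      have hA := h1 t ht (le_trans htδ (le_trans (min_le_left _ _) (min_le_left _ _)))
      have hB := h2 t ht (le_trans htδ (le_trans (min_le_left _ _) (min_le_right _ _)))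
      have hC : t ≤ 1 / ((evalC s n : ℝ) + evalC u n + 1) :=
        le_trans htδ (min_le_right _ _)
      have hpos : (0:ℝ) < (evalC s n : ℝ) + evalC u n + 1 := by positivity
      have hkey : ((evalC s n : ℝ) + evalC u n) * t < 1 := by
        have h0 : ((evalC s n : ℝ) + evalC u n) * t
            ≤ ((evalC s n : ℝ) + evalC u n) * (1 / ((evalC s n : ℝ) + evalC u n + 1)) := by
          apply mul_le_mul_of_nonneg_left hC (by positivity)
        have h1 : ((evalC s n : ℝ) + evalC u n) * (1 / ((evalC s n : ℝ) + evalC u n + 1)) < 1 := by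
          rw [mul_one_div, div_lt_one hpos]; linarith
        linarith
      show max (evalR s (1 - n * t) + evalR u (1 - n * t) - 1) 0
          = 1 - (evalC (WTerm.mul s u) n : ℝ) * t
      rw [hA, hB, max_eq_left (by nlinarith)]
      simp only [evalC]
      push_cast
      ring
  | imp s u ihs ihu =>
    obtain ⟨δ1, hδ1, h1⟩ := ihs
    obtain ⟨δ2, hδ2, h2⟩ := ihu
    refine ⟨min δ1 δ2, lt_min hδ1 hδ2, fun t ht htδ => ?_⟩
    have hA := h1 t ht (le_trans htδ (min_le_left _ _))
    have hB := h2 t ht (le_trans htδ (min_le_right _ _))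
    show min (1 - evalR s (1 - n * t) + evalR u (1 - n * t)) 1
        = 1 - (evalC (WTerm.imp s u) n : ℝ) * t
    rw [hA, hB]
    simp only [evalC]
    rcases le_total (evalC u n) (evalC s n) with hle | hle
    · rw [Nat.sub_eq_zero_of_le hle]
      have : (evalC u n : ℝ) ≤ evalC s n := by exact_mod_cast hle
      rw [min_eq_right (by nlinarith)]
      simp
    · rw [Nat.cast_sub hle]
      have : (evalC u n : ℝ) ≥ evalC s n := by exact_mod_cast hle
      rw [min_eq_left (by nlinarith)]
      ring

/-- if two one-variable Wajsberg terms `p, q` have associated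
McNaughton functions that agree on a neighborhood of `1`, then the identity
`p ≈ q` holds in `C_ω`. -/
theorem germ_at_one_determines_Comega (p q : WTerm)
    (h : ∃ ε > (0 : ℝ), ∀ x ∈ Set.Icc (0 : ℝ) 1, 1 - ε < x → evalR p x = evalR q x) :
    ∀ n : ℕ, evalC p n = evalC q n := by
  obtain ⟨ε, hε, hεeq⟩ := h
  intro n
  obtain ⟨δp, hδp, hp⟩ := evalR_near_one p n
  obtain ⟨δq, hδq, hq⟩ := evalR_near_one q n
  set t : ℝ := min (min δp δq) (min (ε / (n + 1)) (1 / (n + 1))) with ht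
  have hn1 : (0:ℝ) < (n:ℝ) + 1 := by positivity
  have htpos : 0 < t := by
    apply lt_min (lt_min hδp hδq) (lt_min (by positivity) (by positivity))
  have htp : t ≤ δp := le_trans (min_le_left _ _) (min_le_left _ _)
  have htq : t ≤ δq := le_trans (min_le_left _ _) (min_le_right _ _)
  have htε : t ≤ ε / (n + 1) := le_trans (min_le_right _ _) (min_le_left _ _)
  have ht1 : t ≤ 1 / (n + 1) := le_trans (min_le_right _ _) (min_le_right _ _)
  have hnt1 : (n:ℝ) * t < 1 := by
    have : (n:ℝ) * t ≤ (n:ℝ) * (1 / (n + 1)) :=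
      mul_le_mul_of_nonneg_left ht1 (Nat.cast_nonneg n)
    have h2 : (n:ℝ) * (1 / (n + 1)) < 1 := by
      rw [mul_one_div, div_lt_one hn1]; linarith
    linarith
  have hntε : (n:ℝ) * t < ε := by
    have : (n:ℝ) * t ≤ (n:ℝ) * (ε / (n + 1)) :=
      mul_le_mul_of_nonneg_left htε (Nat.cast_nonneg n)
    have h2 : (n:ℝ) * (ε / (n + 1)) < ε := by
      rw [mul_div_assoc', div_lt_iff₀ hn1]
      nlinarith [Nat.cast_nonneg (α := ℝ) n]
    linarith
  have hx : (1 : ℝ) - n * t ∈ Set.Icc (0:ℝ) 1 := by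
    constructor <;> [linarith; nlinarith [Nat.cast_nonneg (α := ℝ) n, htpos.le]]
  have heq := hεeq (1 - n * t) hx (by linarith)
  rw [hp t htpos htp, hq t htpos htq] at heq
  have heq' : ((evalC p n : ℝ) - evalC q n) * t = 0 := by linear_combination -heq
  rcases mul_eq_zero.mp heq' with h | h
  · exact_mod_cast sub_eq_zero.mp h
  · exact absurd h htpos.ne'
end

section
/- The free one-generated algebra in the variety of cancellative hoops is isomorphic to C_ω; consequently any nontrivial totally ordered cancellative hoop generates the same quasivariety as C_ω. -/
/-- Terms in the language `{·, →, 1}` over countably many variables. -/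
inductive HTerm
  | var : ℕ → HTerm
  | one : HTerm
  | mul : HTerm → HTerm → HTerm
  | imp : HTerm → HTerm → HTerm

/-- Evaluation of a term in a hoop under an assignment. -/
def heval {A : Type*} [Hoop A] (v : ℕ → A) : HTerm → A
  | .var n => v n
  | .one => 1
  | .mul s t => heval v s * heval v t
  | .imp s t => Hoop.himp (heval v s) (heval v t)

/-- Evaluation of a term in `C_ω`, the negative cone of `ℤ` presented as
exponents: `⟨ℕ, +, truncated subtraction, 0⟩`, `a^i → a^j = a^{max(j-i,0)}`. -/
def ceval (v : ℕ → ℕ) : HTerm → ℕ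
  | .var n => v n
  | .one => 0
  | .mul s t => ceval v s + ceval v t
  | .imp s t => ceval v t - ceval v s

/-!
For a cancellative hoop `A` and `a : A` one has `aˡ → aᵐ = a^(m - l)`, so `n ↦ aⁿ` is the unique
homomorphism from `C_ω` sending the generator to `a`; it is injective when `a ≠ 1`, so every
quasi-identity of `A` holds in `C_ω`.

Conversely, the Grothendieck group of a totally ordered cancellative hoop `A`, ordered by
divisibility, is a totally ordered abelian group `G` whose positive cone `G⁺`, with
`a → b = max (b - a) 0`, contains `A` as a subhoop. Fix an assignment in `G⁺`. Each term then
agrees with an integer linear form in the variables on the region cut out by the sign conditions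
deciding its `max`es. Fourier–Motzkin elimination shows that any pattern of signs of finitely many
integer linear forms that is realised in `G` is realised in `ℚ`, hence in `ℤ`; a nonnegative integer
point with the sign pattern of a counterexample in `A` is a counterexample in `C_ω`.
-/

open Fintype (linearCombination linearCombination_apply)

theorem linearCombination_snoc {M : Type*} [AddCommGroup M] {n : ℕ} (y : Fin n → M) (t : M)
    (c : Fin (n + 1) → ℤ) :
    linearCombination ℤ (Fin.snoc y t) c =
      linearCombination ℤ y (Fin.init c) + c (Fin.last n) • t := by
  simp [linearCombination_apply, Fin.sum_univ_castSucc, Fin.init]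

section SignPattern

variable {G H : Type*} [AddCommGroup G] [LinearOrder G] [AddCommGroup H] [LinearOrder H]

theorem cmp_linearCombination_comp {n : ℕ} (f : G →+ H) (hf : StrictMono f) (x : Fin n → G)
    (c : Fin n → ℤ) :
    cmp (linearCombination ℤ (f ∘ x) c) 0 = cmp (linearCombination ℤ x c) 0 := by
  have : linearCombination ℤ (f ∘ x) c = f (linearCombination ℤ x c) := by
    simp [linearCombination_apply, map_sum, map_zsmul]
  rw [this, ← hf.cmp_map_eq _ 0, map_zero]

variable [IsOrderedAddMonoid G] [IsOrderedAddMonoid H]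

theorem cmp_zsmul_zero_of_pos {k : ℤ} (hk : 0 < k) (a : G) : cmp (k • a) 0 = cmp a 0 := by
  simpa only [smul_zero] using (zsmul_strictMono_right G hk).cmp_map_eq a 0

theorem cmp_zsmul_zero_of_neg {k : ℤ} (hk : k < 0) (a : G) : cmp (k • a) 0 = cmp 0 a := by
  rw [← neg_neg k, neg_smul, ← zero_sub, cmp_sub_zero, ← cmp_swap,
    cmp_zsmul_zero_of_pos (neg_pos.mpr hk), cmp_swap]

theorem cmp_zsmul_zero_eq_cmp_iff {k : ℤ} (hk : k ≠ 0) {a : G} {b : H} :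
    cmp (k • a) 0 = cmp (k • b) 0 ↔ cmp a 0 = cmp b 0 := by
  rcases hk.lt_or_gt with hk | hk
  · rw [cmp_zsmul_zero_of_neg hk, cmp_zsmul_zero_of_neg hk, cmp_eq_cmp_symm]
  · rw [cmp_zsmul_zero_of_pos hk, cmp_zsmul_zero_of_pos hk]

theorem exists_rat_snoc_cmp_eq {n : ℕ} (P : Finset (Fin (n + 1) → ℤ)) {M : ℤ} (hM : M ≠ 0)
    (hP : ∀ c ∈ P, c (Fin.last n) = M) (x : Fin n → G) (xₙ : G) (q : Fin n → ℚ)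
    (hq : ∀ c ∈ P, ∀ d ∈ P, cmp (linearCombination ℤ q (Fin.init c - Fin.init d)) 0 =
      cmp (linearCombination ℤ x (Fin.init c - Fin.init d)) 0) :
    ∃ t : ℚ, ∀ c ∈ P, cmp (linearCombination ℤ (Fin.snoc q t) c) 0 =
      cmp (linearCombination ℤ (Fin.snoc x xₙ) c) 0 := by
  classical
  -- Without their last term the forms take values at `x` ordered like their values at `q`, so
  -- back-and-forth places `-(M • xₙ)` among the latter.
  let f : Order.PartialIso G ℚ :=
    ⟨P.image fun c => (linearCombination ℤ x (Fin.init c), linearCombination ℤ q (Fin.init c)), by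
      simp only [Finset.mem_image]
      rintro _ ⟨c, hc, rfl⟩ _ ⟨d, hd, rfl⟩
      rw [← cmp_sub_zero, ← cmp_sub_zero (linearCombination ℤ q _), ← map_sub, ← map_sub,
        hq c hc d hd]⟩
  obtain ⟨b, hb⟩ := f.exists_across (-(M • xₙ))
  refine ⟨-b / M, fun c hc => ?_⟩
  rw [linearCombination_snoc, linearCombination_snoc, hP c hc, zsmul_eq_mul (-b / M) M,
    mul_div_cancel₀ _ (by exact_mod_cast hM), ← sub_eq_add_neg, cmp_sub_zero,
    ← sub_neg_eq_add, cmp_sub_zero]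
  exact (hb _ (Finset.mem_image_of_mem _ hc)).symm

theorem exists_rat_cmp_linearCombination_eq : ∀ {n : ℕ} (L : Finset (Fin n → ℤ)) (x : Fin n → G),
    ∃ q : Fin n → ℚ, ∀ c ∈ L,
      cmp (linearCombination ℤ q c) 0 = cmp (linearCombination ℤ x c) 0
  | 0, _, _ => ⟨0, fun _ _ => by simp [linearCombination_apply]⟩
  | n + 1, L, x => by
    classical
    obtain ⟨x, xₙ, rfl⟩ : ∃ x' xₙ, x = Fin.snoc x' xₙ :=
      ⟨Fin.init x, x (Fin.last n), (Fin.snoc_init_self x).symm⟩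
    set P := L.filter fun c => c (Fin.last n) ≠ 0
    set M : ℤ := ∏ c ∈ P, |c (Fin.last n)|
    have hM : M ≠ 0 := Finset.prod_ne_zero_iff.mpr fun c hc => by
      simpa using (Finset.mem_filter.mp hc).2
    -- Fourier–Motzkin: rescaled, every form of `P` has last coefficient `M`, so the comparisons
    -- between them only involve the first `n` variables.
    set ĉ : (Fin (n + 1) → ℤ) → Fin (n + 1) → ℤ := fun c => (M / c (Fin.last n)) • c
    have hĉ : ∀ c ∈ P, ĉ c (Fin.last n) = M := fun c hc => by
      simpa [ĉ] using Int.ediv_mul_cancel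
        ((abs_dvd _ _).mp (Finset.dvd_prod_of_mem (fun c => |c (Fin.last n)|) hc))
    obtain ⟨q, hq⟩ := exists_rat_cmp_linearCombination_eq
      ((L.filter fun c => c (Fin.last n) = 0).image Fin.init ∪
        (P ×ˢ P).image fun cd => Fin.init (ĉ cd.1) - Fin.init (ĉ cd.2)) x
    obtain ⟨t, ht⟩ := exists_rat_snoc_cmp_eq (P.image ĉ) hM
      (by simpa only [Finset.forall_mem_image] using hĉ) x xₙ q (by
        simp only [Finset.forall_mem_image]
        exact fun c hc d hd => hq _ (Finset.mem_union_right _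
          (Finset.mem_image.mpr ⟨(c, d), Finset.mem_product.mpr ⟨hc, hd⟩, rfl⟩)))
    refine ⟨Fin.snoc q t, fun c hc => ?_⟩
    by_cases hc0 : c (Fin.last n) = 0
    · rw [linearCombination_snoc, linearCombination_snoc, hc0, zero_smul, zero_smul, add_zero,
        add_zero]
      exact hq _ (Finset.mem_union_left _
        (Finset.mem_image_of_mem _ (Finset.mem_filter.mpr ⟨hc, hc0⟩)))
    · have hcP : c ∈ P := Finset.mem_filter.mpr ⟨hc, hc0⟩
      have hk : M / c (Fin.last n) ≠ 0 := fun h => hM <| by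
        simpa [ĉ, h] using (hĉ c hcP).symm
      rw [← cmp_zsmul_zero_eq_cmp_iff hk, ← map_zsmul, ← map_zsmul]
      exact ht _ (Finset.mem_image_of_mem _ hcP)

theorem exists_nat_mul_eq_intCast {n : ℕ} (q : Fin n → ℚ) :
    ∃ D : ℕ, 0 < D ∧ ∃ z : Fin n → ℤ, ∀ i, (z i : ℚ) = D * q i := by
  refine ⟨∏ i, (q i).den, Finset.prod_pos fun i _ => (q i).den_pos, ?_⟩
  choose z hz using fun i => show ∃ m : ℤ, (m : ℚ) = (∏ i, (q i).den : ℕ) * q i by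
    obtain ⟨m, hm⟩ := Finset.dvd_prod_of_mem (fun i => (q i).den) (Finset.mem_univ i)
    exact ⟨(q i).num * m, by rw [hm]; push_cast; rw [← Rat.mul_den_eq_num]; ring⟩
  exact ⟨z, hz⟩

theorem exists_int_cmp_linearCombination_eq {n : ℕ} (L : Finset (Fin n → ℤ)) (x : Fin n → G) :
    ∃ z : Fin n → ℤ, ∀ c ∈ L,
      cmp (linearCombination ℤ z c) 0 = cmp (linearCombination ℤ x c) 0 := by
  obtain ⟨q, hq⟩ := exists_rat_cmp_linearCombination_eq L x
  obtain ⟨D, hD, z, hz⟩ := exists_nat_mul_eq_intCast q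
  refine ⟨z, fun c hc => ?_⟩
  have hzq : Int.castAddHom ℚ ∘ z = AddMonoidHom.mulLeft (D : ℚ) ∘ q := funext hz
  rw [← hq c hc, ← cmp_linearCombination_comp (Int.castAddHom ℚ) Int.cast_strictMono, hzq,
    cmp_linearCombination_comp _ (strictMono_mul_left_of_pos (by exact_mod_cast hD))]

end SignPattern

/-- Evaluation of a term in the positive cone of `G`, viewed as a hoop. -/
def coneEval {G : Type*} [AddCommGroup G] [LinearOrder G] (x : ℕ → G) : HTerm → G
  | .var n => x n
  | .one => 0
  | .mul s t => coneEval x s + coneEval x t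
  | .imp s t => max (coneEval x t - coneEval x s) 0

theorem ceval_eq_coneEval (w : ℕ → ℕ) (u : HTerm) :
    (ceval w u : ℤ) = coneEval (fun i => (w i : ℤ)) u := by
  induction u with
  | var i => rfl
  | one => rfl
  | mul s t hs ht => rw [ceval, coneEval, ← hs, ← ht, Nat.cast_add]
  | imp s t hs ht => rw [ceval, coneEval, ← hs, ← ht]; omega

def HTerm.varBound : HTerm → ℕ
  | .var n => n + 1
  | .one => 0
  | .mul s t => max s.varBound t.varBound
  | .imp s t => max s.varBound t.varBound

section PositiveCone

variable {G H : Type*} [AddCommGroup G] [LinearOrder G] [AddCommGroup H] [LinearOrder H]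

theorem max_zero_eq_ite_of_cmp_eq {a : G} {b : H} (h : cmp b 0 = cmp a 0) :
    max b 0 = if 0 ≤ a then b else 0 := by
  have hle := le_iff_le_of_cmp_eq_cmp (cmp_eq_cmp_symm.mp h)
  by_cases ha : 0 ≤ a
  · rw [if_pos ha, max_eq_left (hle.mpr ha)]
  · rw [if_neg ha, max_eq_right (le_of_not_ge (mt hle.mp ha))]

/-- `B` collects the sign conditions that decide the `max`es met while evaluating `u` at `x`. -/
theorem exists_coneEval_eq_linearCombination {n : ℕ} (x : ℕ → G) (u : HTerm)
    (hu : u.varBound ≤ n) :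
    ∃ (L : Fin n → ℤ) (B : Finset (Fin n → ℤ)),
      coneEval x u = linearCombination ℤ (x ∘ Fin.val) L ∧
      ∀ y : ℕ → H, (∀ b ∈ B, cmp (linearCombination ℤ (y ∘ Fin.val) b) 0 =
          cmp (linearCombination ℤ (x ∘ Fin.val) b) 0) →
        coneEval y u = linearCombination ℤ (y ∘ Fin.val) L := by
  classical
  induction u with
  | var i => refine ⟨Pi.single ⟨i, hu⟩ 1, ∅, ?_, fun y _ => ?_⟩ <;> simp [coneEval]
  | one => exact ⟨0, ∅, by simp [coneEval], fun y _ => by simp [coneEval]⟩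
  | mul s t hs ht =>
    obtain ⟨Ls, Bs, hxs, hys⟩ := hs (le_of_max_le_left hu)
    obtain ⟨Lt, Bt, hxt, hyt⟩ := ht (le_of_max_le_right hu)
    refine ⟨Ls + Lt, Bs ∪ Bt, by rw [coneEval, map_add, hxs, hxt], fun y hy => ?_⟩
    rw [coneEval, map_add, hys y fun b hb => hy b (Finset.mem_union_left _ hb),
      hyt y fun b hb => hy b (Finset.mem_union_right _ hb)]
  | imp s t hs ht =>
    obtain ⟨Ls, Bs, hxs, hys⟩ := hs (le_of_max_le_left hu)
    obtain ⟨Lt, Bt, hxt, hyt⟩ := ht (le_of_max_le_right hu)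
    refine ⟨if 0 ≤ linearCombination ℤ (x ∘ Fin.val) (Lt - Ls) then Lt - Ls else 0,
      insert (Lt - Ls) (Bs ∪ Bt), ?_, fun y hy => ?_⟩
    · rw [coneEval, apply_ite (linearCombination ℤ _), map_zero,
        ← max_zero_eq_ite_of_cmp_eq rfl, map_sub, hxs, hxt]
    · rw [coneEval, apply_ite (linearCombination ℤ _), map_zero,
        ← max_zero_eq_ite_of_cmp_eq (hy _ (Finset.mem_insert_self _ _)), map_sub,
        hys y fun b hb => hy b (by simp [hb]), hyt y fun b hb => hy b (by simp [hb])]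

variable [IsOrderedAddMonoid G]

theorem exists_nat_ceval_eq_iff_coneEval_eq (T : List HTerm) (x : ℕ → G) (hx : ∀ i, 0 ≤ x i) :
    ∃ w : ℕ → ℕ, ∀ u ∈ T, ∀ u' ∈ T, ceval w u = ceval w u' ↔ coneEval x u = coneEval x u' := by
  classical
  set n := (T.map HTerm.varBound).sum
  choose! L B hxL hyL using fun u (hu : u ∈ T) =>
    exists_coneEval_eq_linearCombination (H := ℤ) x u (n := n)
      (List.le_sum_of_mem (List.mem_map_of_mem hu))
  set E := (T.toFinset ×ˢ T.toFinset).image fun uu => L uu.1 - L uu.2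
  -- `z` keeps the branches of every term, every (in)equality between terms, and `z ≥ 0`.
  obtain ⟨z, hz⟩ := exists_int_cmp_linearCombination_eq
    (T.toFinset.biUnion B ∪ E ∪ Finset.univ.image fun i => Pi.single i 1) (x ∘ Fin.val)
  have hz0 : ∀ i, 0 ≤ z i := fun i => by
    have := hz (Pi.single i 1)
      (Finset.mem_union_right _ (Finset.mem_image_of_mem _ (Finset.mem_univ i)))
    simp only [Fintype.linearCombination_apply_single, one_smul] at this
    exact (le_iff_le_of_cmp_eq_cmp (cmp_eq_cmp_symm.mp this)).mpr (hx i)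
  set w : ℕ → ℕ := fun i => if h : i < n then (z ⟨i, h⟩).toNat else 0
  have hwz : (fun i => (w i : ℤ)) ∘ Fin.val = z := funext fun i => by simp [w, hz0]
  have hw : ∀ u ∈ T, (ceval w u : ℤ) = linearCombination ℤ z (L u) := fun u hu => by
    rw [ceval_eq_coneEval, hyL u hu _ fun b hb => hwz ▸ hz b (Finset.mem_union_left _
      (Finset.mem_union_left _ (Finset.mem_biUnion.mpr ⟨u, List.mem_toFinset.mpr hu, hb⟩))), hwz]
  refine ⟨w, fun u hu u' hu' => ?_⟩
  have hE : L u - L u' ∈ E := Finset.mem_image.mpr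
    ⟨(u, u'), Finset.mem_product.mpr ⟨List.mem_toFinset.mpr hu, List.mem_toFinset.mpr hu'⟩, rfl⟩
  rw [← Nat.cast_inj (R := ℤ), hw u hu, hw u' hu', hxL u hu, hxL u' hu', ← sub_eq_zero,
    ← map_sub, ← sub_eq_zero (a := linearCombination ℤ _ (L u)), ← map_sub]
  exact eq_iff_eq_of_cmp_eq_cmp (hz _ (Finset.mem_union_left _ (Finset.mem_union_right _ hE)))

theorem coneEval_eq_of_forall_ceval (prem : List (HTerm × HTerm)) (s t : HTerm)
    (hN : ∀ w : ℕ → ℕ, (∀ pq ∈ prem, ceval w pq.1 = ceval w pq.2) → ceval w s = ceval w t)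
    (x : ℕ → G) (hx : ∀ i, 0 ≤ x i) (hprem : ∀ pq ∈ prem, coneEval x pq.1 = coneEval x pq.2) :
    coneEval x s = coneEval x t := by
  set T := s :: t :: prem.flatMap fun pq => [pq.1, pq.2]
  have hpremT : ∀ pq ∈ prem, pq.1 ∈ T ∧ pq.2 ∈ T := fun pq hpq => by
    simp only [T, List.mem_cons, List.mem_flatMap]
    exact ⟨.inr (.inr ⟨pq, hpq, by simp⟩), .inr (.inr ⟨pq, hpq, by simp⟩)⟩
  obtain ⟨w, hw⟩ := exists_nat_ceval_eq_iff_coneEval_eq T x hx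
  refine (hw s (by simp [T]) t (by simp [T])).mp (hN w fun pq hpq => ?_)
  exact (hw _ (hpremT pq hpq).1 _ (hpremT pq hpq).2).mpr (hprem pq hpq)

end PositiveCone

universe u

namespace Hoop

local infixr:60 " ⇨ " => Hoop.himp

variable {A : Type u} [Hoop A]

theorem one_himp_himp (a b : A) : 1 ⇨ a ⇨ b = a ⇨ b := by
  rw [← himp_mul, one_mul]

theorem map_heval {G : Type*} [AddCommGroup G] [LinearOrder G] (ι : A → G) (h₁ : ι 1 = 0)
    (hmul : ∀ a b, ι (a * b) = ι a + ι b) (himp : ∀ a b, ι (a ⇨ b) = max (ι b - ι a) 0)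
    (v : ℕ → A) (u : HTerm) : ι (heval v u) = coneEval (ι ∘ v) u := by
  induction u with
  | var i => rfl
  | one => exact h₁
  | mul s t hs ht => rw [heval, coneEval, hmul, hs, ht]
  | imp s t hs ht => rw [heval, coneEval, himp, hs, ht]

variable [IsCancelMul A]

theorem himp_one (a : A) : a ⇨ 1 = 1 := by
  have key : ∀ b : A, (1 ⇨ b) ⇨ 1 = 1 := fun b => by
    refine mul_left_cancel (a := 1 ⇨ b) ?_
    rw [div_eq, one_mul, one_himp_himp, mul_one]
  have h : (a ⇨ 1) ⇨ 1 = 1 := by simpa only [one_himp_himp] using key (a ⇨ 1)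
  calc a ⇨ 1 = a ⇨ (a ⇨ 1) ⇨ 1 := by rw [h]
    _ = (1 ⇨ a) ⇨ 1 := by rw [← himp_mul, div_eq, one_mul]
    _ = 1 := key a

theorem himp_eq_one_iff_dvd {a b : A} : a ⇨ b = 1 ↔ b ∣ a := by
  refine ⟨fun h => ⟨b ⇨ a, ?_⟩, ?_⟩
  · simpa only [h, mul_one] using div_eq a b
  · rintro ⟨c, rfl⟩
    rw [mul_comm, himp_mul, himp_self, himp_one]

theorem mul_himp_of_dvd {a b : A} (h : a ∣ b) : a * (a ⇨ b) = b := by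
  rw [div_eq, himp_eq_one_iff_dvd.mpr h, mul_one]

theorem himp_mul_cancel_left (a b : A) : a ⇨ a * b = b :=
  mul_left_cancel (mul_himp_of_dvd (dvd_mul_right a b))

theorem eq_one_of_mul_eq_one {a b : A} (h : a * b = 1) : a = 1 := by
  have hb : b = 1 := by rw [← himp_mul_cancel_left a b, h, himp_one]
  rwa [hb, mul_one] at h

theorem himp_pow (a : A) (l m : ℕ) : a ^ l ⇨ a ^ m = a ^ (m - l) := by
  rcases le_total l m with h | h
  · rw [← himp_mul_cancel_left (a ^ l) (a ^ (m - l)), ← pow_add, Nat.add_sub_cancel' h]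
  · rw [Nat.sub_eq_zero_of_le h, pow_zero, himp_eq_one_iff_dvd]
    exact pow_dvd_pow a h

theorem existsUnique_hom_nat (a : A) :
    ∃! f : ℕ → A, f 0 = 1 ∧ f 1 = a ∧ (∀ l m : ℕ, f (l + m) = f l * f m) ∧
      ∀ l m : ℕ, f l ⇨ f m = f (m - l) := by
  refine ⟨(a ^ ·), ⟨pow_zero a, pow_one a, pow_add a, himp_pow a⟩, ?_⟩
  rintro f ⟨h0, h1, hadd, -⟩
  funext n
  induction n with
  | zero => rw [pow_zero, h0]
  | succ n ih => rw [hadd, ih, h1, pow_succ]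

theorem heval_pow (a : A) (v : ℕ → ℕ) (u : HTerm) :
    heval (fun i => a ^ v i) u = a ^ ceval v u := by
  induction u with
  | var i => rfl
  | one => exact (pow_zero a).symm
  | mul s t hs ht => rw [heval, ceval, hs, ht, pow_add]
  | imp s t hs ht => rw [heval, ceval, hs, ht, himp_pow]

theorem pow_injective {a : A} (ha : a ≠ 1) : Function.Injective (a ^ · : ℕ → A) := by
  intro m n h
  wlog hmn : m ≤ n generalizing m n
  · exact (this h.symm (le_of_not_ge hmn)).symm
  obtain ⟨_ | k, rfl⟩ := Nat.exists_eq_add_of_le hmn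
  · rfl
  · simp only [pow_add, pow_succ'] at h
    rw [← mul_one (a ^ m), mul_assoc, one_mul] at h
    exact absurd (eq_one_of_mul_eq_one (mul_left_cancel h).symm) ha

theorem ceval_eq_of_forall_heval {a : A} (ha : a ≠ 1) (prem : List (HTerm × HTerm)) (s t : HTerm)
    (hA : ∀ v : ℕ → A, (∀ pq ∈ prem, heval v pq.1 = heval v pq.2) → heval v s = heval v t)
    (w : ℕ → ℕ) (hw : ∀ pq ∈ prem, ceval w pq.1 = ceval w pq.2) : ceval w s = ceval w t := by
  apply pow_injective ha
  simp only [← heval_pow]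
  exact hA _ fun pq hpq => by rw [heval_pow, heval_pow, hw pq hpq]

/-- The divisibility order: `1` is the least element and products grow, as in `C_ω` presented
by exponents; it is the reverse of the usual order `a ≤ b ↔ a ⇨ b = 1` of a hoop. -/
noncomputable abbrev dvdLinearOrder (htot : ∀ a b : A, a ⇨ b = 1 ∨ b ⇨ a = 1) :
    LinearOrder A where
  le a b := a ∣ b
  le_refl := dvd_refl
  le_trans _ _ _ := dvd_trans
  le_antisymm a b := by
    rintro ⟨c, rfl⟩ ⟨d, hd⟩
    rw [mul_assoc, eq_comm, ← mul_one a, mul_assoc, one_mul] at hd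
    rw [eq_one_of_mul_eq_one (mul_left_cancel hd), mul_one]
  le_total a b := (htot b a).imp himp_eq_one_iff_dvd.mp himp_eq_one_iff_dvd.mp
  toDecidableLE := Classical.decRel _

theorem isOrderedCancelMonoid_dvdLinearOrder (htot : ∀ a b : A, a ⇨ b = 1 ∨ b ⇨ a = 1) :
    letI := dvdLinearOrder htot
    IsOrderedCancelMonoid A :=
  letI := dvdLinearOrder htot
  { mul_le_mul_left := fun _ _ h c => mul_dvd_mul_right h c
    le_of_mul_le_mul_left := fun a b _ ⟨d, hd⟩ =>
      ⟨d, mul_left_cancel (hd.trans (mul_assoc a b d))⟩ }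

theorem exists_embedding_positiveCone (htot : ∀ a b : A, a ⇨ b = 1 ∨ b ⇨ a = 1) :
    ∃ (G : Type u) (_ : AddCommGroup G) (_ : LinearOrder G) (_ : IsOrderedAddMonoid G)
      (ι : A → G), Function.Injective ι ∧ (∀ a, 0 ≤ ι a) ∧ ι 1 = 0 ∧
        (∀ a b, ι (a * b) = ι a + ι b) ∧ ∀ a b, ι (a ⇨ b) = max (ι b - ι a) 0 := by
  let := dvdLinearOrder htot
  have := isOrderedCancelMonoid_dvdLinearOrder htot
  let e : A ↪o Algebra.GrothendieckGroup A := Localization.mkOrderEmbedding 1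
  let ι : A → Additive (Algebra.GrothendieckGroup A) := fun a => Additive.ofMul (e a)
  have hmono : Monotone ι := fun a b h => Additive.ofMul_le.mpr (e.monotone h)
  have h₁ : ι 1 = 0 := congrArg Additive.ofMul Localization.mk_one
  have hmul : ∀ a b, ι (a * b) = ι a + ι b := fun a b => by
    rw [← ofMul_mul]
    exact congrArg Additive.ofMul (by simp [e, Localization.mk_mul])
  have hpos : ∀ a, 0 ≤ ι a := fun a => h₁ ▸ hmono (one_dvd a)
  refine ⟨_, inferInstance, inferInstance, inferInstance, ι,
    fun a b h => e.injective (Additive.ofMul.injective h), hpos, h₁, hmul, fun a b => ?_⟩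
  rcases le_total a b with h | h
  · have hb := congrArg ι (mul_himp_of_dvd h)
    rw [hmul] at hb
    rw [← hb, add_sub_cancel_left, max_eq_left (hpos _)]
  · rw [himp_eq_one_iff_dvd.mpr h, h₁, max_eq_right (sub_nonpos.mpr (hmono h))]

theorem heval_eq_of_forall_ceval (htot : ∀ a b : A, a ⇨ b = 1 ∨ b ⇨ a = 1)
    (prem : List (HTerm × HTerm)) (s t : HTerm)
    (hN : ∀ w : ℕ → ℕ, (∀ pq ∈ prem, ceval w pq.1 = ceval w pq.2) → ceval w s = ceval w t)
    (v : ℕ → A) (hv : ∀ pq ∈ prem, heval v pq.1 = heval v pq.2) : heval v s = heval v t := by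
  obtain ⟨G, _, _, _, ι, hinj, hpos, h₁, hmul, himp⟩ := exists_embedding_positiveCone htot
  apply hinj
  rw [map_heval ι h₁ hmul himp, map_heval ι h₁ hmul himp]
  refine coneEval_eq_of_forall_ceval prem s t hN (ι ∘ v) (fun i => hpos (v i)) fun pq hpq => ?_
  rw [← map_heval ι h₁ hmul himp, ← map_heval ι h₁ hmul himp, hv pq hpq]

end Hoop

theorem isCancelMul_of_mul_right_cancel {M : Type*} [CommMonoid M]
    (h : ∀ a b c : M, a * c = b * c → a = b) : IsCancelMul M :=
  have : IsRightCancelMul M := ⟨fun a _ _ hbc => h _ _ a hbc⟩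
  CommMagma.IsRightCancelMul.toIsCancelMul M

/-- `C_ω` is the free one-generated cancellative hoop — for every
cancellative hoop `A` and every `a : A` there is a unique homomorphism of `C_ω`
into `A` sending the generator to `a` — and consequently every nontrivial totally
ordered cancellative hoop satisfies exactly the same quasiequations as `C_ω`,
i.e. generates the same quasivariety. -/
theorem Comega_free_cancellative :
    (∀ (A : Type) [Hoop A], (∀ a b c : A, a * c = b * c → a = b) →
      ∀ a : A, ∃! f : ℕ → A, f 0 = 1 ∧ f 1 = a ∧
        (∀ l m : ℕ, f (l + m) = f l * f m) ∧
        (∀ l m : ℕ, Hoop.himp (f l) (f m) = f (m - l))) ∧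
    (∀ (A : Type) [Hoop A], (∀ a b c : A, a * c = b * c → a = b) →
      (∀ a b : A, Hoop.himp a b = 1 ∨ Hoop.himp b a = 1) →
      (∃ a : A, a ≠ 1) →
      ∀ (prem : List (HTerm × HTerm)) (s t : HTerm),
        ((∀ v : ℕ → ℕ, (∀ pq ∈ prem, ceval v pq.1 = ceval v pq.2) →
            ceval v s = ceval v t) ↔
         (∀ v : ℕ → A, (∀ pq ∈ prem, heval v pq.1 = heval v pq.2) →
            heval v s = heval v t))) := by
  refine ⟨fun A _ hc a => ?_, fun A _ hc htot ⟨a, ha⟩ prem s t => ?_⟩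
  · have := isCancelMul_of_mul_right_cancel hc
    exact Hoop.existsUnique_hom_nat a
  · have := isCancelMul_of_mul_right_cancel hc
    exact ⟨Hoop.heval_eq_of_forall_ceval htot prem s t, Hoop.ceval_eq_of_forall_heval ha prem s t⟩
end

section
/- A quasivariety Q is structural (i.e., no proper subquasivariety of Q generates the same variety H(Q)) if and only if Q equals the quasivariety generated by its free algebra on countably many generators, Q = Q(F_Q(ω)). -/
universe u

/-- An algebraic signature: a type of operation symbols with arities. -/
structure Sig where
  ops : Type
  ar : ops → ℕ

/-- Terms of a signature over countably many variables. -/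
inductive Term (σ : Sig) : Type
  | var : ℕ → Term σ
  | app : (o : σ.ops) → (Fin (σ.ar o) → Term σ) → Term σ

/-- An algebra for the signature `σ`. -/
structure Alg (σ : Sig) where
  carrier : Type
  interp : (o : σ.ops) → (Fin (σ.ar o) → carrier) → carrier

/-- Evaluation of a term under an assignment. -/
def evalT {σ : Sig} (A : Alg σ) (v : ℕ → A.carrier) : Term σ → A.carrier
  | .var n => v n
  | .app o args => A.interp o fun i => evalT A v (args i)

/-- Validity of a quasiequation (premises `prem`, conclusion `c`) in `A`. -/
def SatQ {σ : Sig} (A : Alg σ) (prem : List (Term σ × Term σ)) (c : Term σ × Term σ) : Prop :=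
  ∀ v : ℕ → A.carrier, (∀ p ∈ prem, evalT A v p.1 = evalT A v p.2) →
    evalT A v c.1 = evalT A v c.2

/-- A quasivariety: a class of algebras axiomatized by a set of quasiequations
(equivalently, closed under `I`, `S`, `P`, `P_u`). -/
def IsQuasivariety {σ : Sig} (Q : Alg σ → Prop) : Prop :=
  ∃ E : Set (List (Term σ × Term σ) × (Term σ × Term σ)),
    ∀ A, Q A ↔ ∀ e ∈ E, SatQ A e.1 e.2

/-- Identification of terms having the same value in every member of `Q` under
every assignment: the congruence defining the free algebra `F_Q(ω)`. -/
def FreeSetoid {σ : Sig} (Q : Alg σ → Prop) : Setoid (Term σ) where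
  r s t := ∀ A, Q A → ∀ v, evalT A v s = evalT A v t
  iseqv := ⟨fun _ _ _ _ => rfl, fun h A hA v => (h A hA v).symm,
    fun h1 h2 A hA v => (h1 A hA v).trans (h2 A hA v)⟩

/-- The free algebra of `Q` on countably many generators: the term algebra
modulo `Q`-valid identities. -/
def FreeAlg {σ : Sig} (Q : Alg σ → Prop) : Alg σ where
  carrier := Quotient (FreeSetoid Q)
  interp o args := Quotient.liftOn (Quotient.finChoice args)
    (fun f => Quotient.mk (FreeSetoid Q) (Term.app o f))
    (by
      intro f g hfg
      apply Quotient.sound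
      intro A hA v
      show evalT A v (Term.app o f) = evalT A v (Term.app o g)
      show A.interp o (fun i => evalT A v (f i)) = A.interp o (fun i => evalT A v (g i))
      exact congrArg _ (funext fun i => hfg i A hA v))

/-!
Every assignment of `F_Q(ω)` is a substitution of terms followed by the quotient map, so the
quasiequations valid in `F_Q(ω)` depend only on the equational theory of `Q`, and `F_Q(ω)`
satisfies every quasiequation valid in `Q`. Hence `Q(F_Q(ω)) ⊆ Q` has the identities of `Q`
(they are forced by `F_Q(ω)` at the generic assignment), and every subquasivariety `Q'` with the
identities of `Q` has the same free algebra quasiequations, so it contains `Q(F_Q(ω))`.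
-/

/-- `Q(B)`, given by its axioms rather than as the closure of `B` under `I, S, P, P_u`. -/
def QuasivarietyOf {σ : Sig} (B : Alg σ) (A : Alg σ) : Prop :=
  ∀ prem c, SatQ B prem c → SatQ A prem c

lemma isQuasivariety_quasivarietyOf {σ : Sig} (B : Alg σ) : IsQuasivariety (QuasivarietyOf B) :=
  ⟨{e | SatQ B e.1 e.2}, fun _ => ⟨fun h e he => h e.1 e.2 he, fun h prem c hc => h (prem, c) hc⟩⟩

def substT {σ : Sig} (f : ℕ → Term σ) : Term σ → Term σ
  | .var n => f n
  | .app o a => .app o fun i => substT f (a i)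

lemma evalT_substT {σ : Sig} (A : Alg σ) (w : ℕ → A.carrier) (f : ℕ → Term σ) (t : Term σ) :
    evalT A w (substT f t) = evalT A (fun n => evalT A w (f n)) t := by
  induction t with
  | var n => rfl
  | app o a ih => exact congrArg (A.interp o) (funext ih)

lemma substT_var {σ : Sig} (t : Term σ) : substT Term.var t = t := by
  induction t with
  | var n => rfl
  | app o a ih => exact congrArg (Term.app o) (funext ih)

section FreeAlg

variable {σ : Sig} (Q : Alg σ → Prop)

lemma evalT_freeAlg (f : ℕ → Term σ) (t : Term σ) :
    evalT (FreeAlg Q) (fun n => ⟦f n⟧) t = ⟦substT f t⟧ := by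
  induction t with
  | var n => rfl
  | app o a ih =>
    change Quotient.liftOn (Quotient.finChoice fun i => evalT (FreeAlg Q) _ (a i)) _ _ = _
    simp only [ih, Quotient.finChoice_eq]
    rfl

lemma satQ_freeAlg_iff (prem : List (Term σ × Term σ)) (c : Term σ × Term σ) :
    SatQ (FreeAlg Q) prem c ↔ ∀ f : ℕ → Term σ,
      (∀ p ∈ prem, FreeSetoid Q (substT f p.1) (substT f p.2)) →
        FreeSetoid Q (substT f c.1) (substT f c.2) := by
  constructor
  · intro h f hprem
    have hc := h (fun n => ⟦f n⟧) fun p hp => by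
      rw [evalT_freeAlg, evalT_freeAlg]
      exact Quotient.sound (hprem p hp)
    simp only [evalT_freeAlg] at hc
    exact Quotient.exact hc
  · intro h v hprem
    have hv : v = fun n => ⟦(v n).out⟧ := funext fun n => (Quotient.out_eq _).symm
    rw [hv] at hprem ⊢
    simp only [evalT_freeAlg] at hprem ⊢
    exact Quotient.sound (h _ fun p hp => Quotient.exact (hprem p hp))

lemma satQ_freeAlg_of_forall {prem : List (Term σ × Term σ)} {c : Term σ × Term σ}
    (h : ∀ A, Q A → SatQ A prem c) : SatQ (FreeAlg Q) prem c := by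
  refine (satQ_freeAlg_iff Q prem c).2 fun f hprem A hA w => ?_
  simp only [evalT_substT]
  exact h A hA _ fun p hp => by simpa only [evalT_substT] using hprem p hp A hA w

lemma satQ_freeAlg_nil_iff (s t : Term σ) : SatQ (FreeAlg Q) [] (s, t) ↔ FreeSetoid Q s t := by
  refine ⟨fun h => ?_, fun h => satQ_freeAlg_of_forall Q fun A hA w _ => h A hA w⟩
  simpa only [substT_var] using (satQ_freeAlg_iff Q [] (s, t)).1 h Term.var (by simp)

lemma quasivarietyOf_freeAlg_congr {Q' : Alg σ → Prop}
    (h : ∀ s t, FreeSetoid Q' s t ↔ FreeSetoid Q s t) (A : Alg σ) :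
    QuasivarietyOf (FreeAlg Q') A ↔ QuasivarietyOf (FreeAlg Q) A := by
  have hsat : ∀ prem c, SatQ (FreeAlg Q') prem c ↔ SatQ (FreeAlg Q) prem c := by
    intro prem c
    simp only [satQ_freeAlg_iff, h]
  simp only [QuasivarietyOf, hsat]

variable {Q}

lemma quasivarietyOf_freeAlg_le (hQ : IsQuasivariety Q) {A : Alg σ}
    (hA : QuasivarietyOf (FreeAlg Q) A) : Q A := by
  obtain ⟨E, hE⟩ := hQ
  exact (hE A).2 fun e he => hA e.1 e.2 (satQ_freeAlg_of_forall Q fun B hB => (hE B).1 hB e he)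

lemma freeSetoid_quasivarietyOf_freeAlg (s t : Term σ) :
    FreeSetoid (QuasivarietyOf (FreeAlg Q)) s t ↔ FreeSetoid Q s t := by
  refine ⟨fun h => (satQ_freeAlg_nil_iff Q s t).1 fun v _ => h _ (fun _ _ h => h) v,
    fun h A hA v => hA [] (s, t) ((satQ_freeAlg_nil_iff Q s t).2 h) v (by simp)⟩

end FreeAlg

/-- Bergman: a quasivariety `Q` is structural — no proper
subquasivariety of `Q` generates the same variety `H(Q)` (i.e. has the same
equational theory) — iff `Q` is the quasivariety generated by its free algebra
on countably many generators, i.e. `Q` consists exactly of the algebras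
satisfying all quasiequations valid in `F_Q(ω)`. -/
theorem structural_iff_generated_by_free {σ : Sig} (Q : Alg σ → Prop)
    (hQ : IsQuasivariety Q) :
    (∀ Q' : Alg σ → Prop, IsQuasivariety Q' → (∀ A, Q' A → Q A) →
        (∀ s t : Term σ, (∀ A, Q' A → ∀ v, evalT A v s = evalT A v t) ↔
                         (∀ A, Q A → ∀ v, evalT A v s = evalT A v t)) →
        Q' = Q)
    ↔ (∀ A, Q A ↔ ∀ prem c, SatQ (FreeAlg Q) prem c → SatQ A prem c) := by
  constructor
  · intro hstruct A
    have hgen : QuasivarietyOf (FreeAlg Q) = Q :=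
      hstruct _ (isQuasivariety_quasivarietyOf _) (fun _ => quasivarietyOf_freeAlg_le hQ)
        freeSetoid_quasivarietyOf_freeAlg
    exact (iff_of_eq (congrFun hgen A)).symm
  · intro hgen Q' hQ' hQ'Q hth
    funext A
    refine propext ⟨hQ'Q A, fun hA => quasivarietyOf_freeAlg_le hQ' ?_⟩
    exact (quasivarietyOf_freeAlg_congr Q hth A).2 ((hgen A).1 hA)
end
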